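/- Let F = ℚ(s) be the field of rational functions in one variable s over ℚ, with s the generator, and set α = s². For every integer k ≥ 2 and every partition λ, the element s^{k−2} · M_k^s(λ) of F is a polynomial in α with integer coefficients, i.e. it lies in the subring ℤ[s²] of F. -/

import Mathlib

open scoped BigOperators Classical
open Polynomial

noncomputable section

namespace JackPaper

/-! ## Partitions: parts, corners, moments, free cumulants -/

/-- The `i`-th part (1-indexed) of a partition, `0` if `i` exceeds the length. -/
def pt {n : ℕ} (lam : n.Partition) (i : ℕ) : ℕ :=
  ((lam.parts.sort (· ≤ ·)).reverse).getD (i - 1) 0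

/-- Indices of outer corners: `0 ≤ i ≤ ℓ` with `λ_i > λ_{i+1}` (convention `λ_0 = +∞`). -/
def outerIdx {n : ℕ} (lam : n.Partition) : Finset ℕ :=
  (Finset.range (Multiset.card lam.parts + 1)).filter
    (fun i => i = 0 ∨ pt lam (i + 1) < pt lam i)

/-- Indices of inner corners: `1 ≤ i ≤ ℓ` with `λ_i > λ_{i+1}`. -/
def innerIdx {n : ℕ} (lam : n.Partition) : Finset ℕ :=
  (Finset.range (Multiset.card lam.parts + 1)).filter
    (fun i => i ≠ 0 ∧ pt lam (i + 1) < pt lam i)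

/-- Multiset of contents `λ_{i+1} − i` of the outer corners of a Young diagram. -/
def outerContents {n : ℕ} (lam : n.Partition) : Multiset ℤ :=
  (outerIdx lam).val.map (fun i => (pt lam (i + 1) : ℤ) - (i : ℤ))

/-- Multiset of contents `λ_i − i` of the inner corners of a Young diagram. -/
def innerContents {n : ℕ} (lam : n.Partition) : Multiset ℤ :=
  (innerIdx lam).val.map (fun i => (pt lam i : ℤ) - (i : ℤ))

variable (K : Type*) [Field K]

/-- Anisotropic outer corner contents `s·λ_{i+1} − i·s⁻¹`. -/
def outerContentsA (s : K) {n : ℕ} (lam : n.Partition) : Multiset K :=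
  (outerIdx lam).val.map (fun i => s * (pt lam (i + 1) : K) - (i : K) * s⁻¹)

/-- Anisotropic inner corner contents `s·λ_i − i·s⁻¹`. -/
def innerContentsA (s : K) {n : ℕ} (lam : n.Partition) : Multiset K :=
  (innerIdx lam).val.map (fun i => s * (pt lam i : K) - (i : K) * s⁻¹)

/-- The generating series `Σ_k M_k^s(λ) w^k` of the anisotropic moments of `λ`, defined as
`∏_{c ∈ I_λ^s} (1 − c·w) · (∏_{c ∈ O_λ^s} (1 − c·w))⁻¹`. -/
def momentSeries (s : K) {n : ℕ} (lam : n.Partition) : PowerSeries K :=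
  ((innerContentsA K s lam).map (fun c => 1 - PowerSeries.C c * PowerSeries.X)).prod *
    (((outerContentsA K s lam).map (fun c => 1 - PowerSeries.C c * PowerSeries.X)).prod)⁻¹

/-- The `k`-th anisotropic moment `M_k^s(λ)`. -/
def M (s : K) {n : ℕ} (lam : n.Partition) (k : ℕ) : K :=
  PowerSeries.coeff k (momentSeries K s lam)

/-- The anisotropic free cumulants `R_k^s(λ)`: the unique scalars satisfying
`C(w) = 1 + Σ_{k ≥ 1} R_k (w·C(w))^k` where `C(w) = Σ_k M_k^s(λ) w^k`, i.e. for every `m ≥ 1`,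
`M_m = Σ_{k=1}^{m} R_k · [w^m] (w C(w))^k`; since `[w^m] (w C(w))^m = 1` this determines `R_m`
recursively. -/
def Rcum (s : K) {n : ℕ} (lam : n.Partition) : ℕ → K
  | m =>
    PowerSeries.coeff m (momentSeries K s lam) -
      ∑ k ∈ (Finset.Icc 1 (m - 1)).attach,
        Rcum s lam k.1 *
          PowerSeries.coeff m ((PowerSeries.X * momentSeries K s lam) ^ (k.1 : ℕ))
  termination_by m => m
  decreasing_by
    have hk := k.2
    simp only [Finset.mem_Icc] at hk
    omega

/-! ## Jack families over `F = ℚ(s)` -/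

/-- The field `F = ℚ(s)` of rational functions in one variable over `ℚ`. -/
abbrev F : Type := RatFunc ℚ

/-- `z_ρ = ρ_1 ρ_2 ⋯ m_1(ρ)! m_2(ρ)! ⋯`. -/
def zee {n : ℕ} (ρ : n.Partition) : ℕ :=
  ρ.parts.prod * ∏ j ∈ Finset.Icc 1 n, (ρ.parts.count j).factorial

/-- Dominance order: `Dominates λ μ` means `μ ⊴ λ`, i.e.
`μ_1 + ⋯ + μ_i ≤ λ_1 + ⋯ + λ_i` for all `i`. -/
def Dominates {n : ℕ} (lam mu : n.Partition) : Prop :=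
  ∀ i : ℕ, ∑ j ∈ Finset.Icc 1 i, pt mu j ≤ ∑ j ∈ Finset.Icc 1 i, pt lam j

/-- The partition `(1,…,1)` of `n`. -/
def onesPartition (n : ℕ) : n.Partition :=
  ⟨Multiset.replicate n 1, fun hi => by rw [Multiset.eq_of_mem_replicate hi]; norm_num,
    by simp⟩

/-- A family of symmetric polynomials in `N` variables over `F`, given through the coefficients
`c` of its monomial expansions and `θ` of its power-sum expansions, is a Jack family for the
parameter `α` if: (0) both expansions agree (this defines `J_λ = Σ_μ c_{λμ} m_μ = Σ_ρ θ_ρ(λ) p_ρ`);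
(i) `c λ μ = 0` unless `μ ⊴ λ`; (ii) `Σ_ρ z_ρ α^{ℓ(ρ)} θ_ρ(λ) θ_ρ(ν) = 0` for `λ ≠ ν`;
(iii) `c_{λ,(1,…,1)} = n!`. -/
def IsJackFamily (n N : ℕ) (α : F) (c θ : n.Partition → n.Partition → F) : Prop :=
  (∀ lam : n.Partition,
      (∑ mu : n.Partition, c lam mu • MvPolynomial.msymm (Fin N) F mu) =
        ∑ ρ : n.Partition, θ ρ lam • MvPolynomial.psumPart (Fin N) F ρ) ∧
  (∀ lam mu : n.Partition, ¬ Dominates lam mu → c lam mu = 0) ∧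
  (∀ lam nu : n.Partition, lam ≠ nu →
      ∑ ρ : n.Partition, (zee ρ : F) * α ^ (Multiset.card ρ.parts) * θ ρ lam * θ ρ nu = 0) ∧
  (∀ lam : n.Partition, c lam (onesPartition n) = (n.factorial : F))

/-- `μ ∪ (1^{m−k})`: the partition of `m` obtained from `μ ⊢ k` by adding `m − k` parts
equal to `1`. -/
def padOnes {k m : ℕ} (mu : k.Partition) (h : k ≤ m) : m.Partition :=
  ⟨mu.parts + Multiset.replicate (m - k) 1, by
    intro i hi
    rcases Multiset.mem_add.1 hi with h' | h'
    · exact mu.parts_pos h'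
    · rw [Multiset.eq_of_mem_replicate h']; norm_num, by
    simp [mu.parts_sum]; omega⟩

/-- The Jack character
`Ch_μ(λ) = s^{−(|μ|−ℓ(μ))} · C(|λ|−|μ|+m₁(μ), m₁(μ)) · z_μ · θ_{μ ∪ 1^{|λ|−|μ|}}(λ)`. -/
def Ch (θ : ∀ n : ℕ, n.Partition → n.Partition → F) {k m : ℕ} (mu : k.Partition)
    (lam : m.Partition) (h : k ≤ m) : F :=
  (RatFunc.X ^ (k - Multiset.card mu.parts))⁻¹ *
    ((m - k + mu.parts.count 1).choose (mu.parts.count 1) : F) * (zee mu : F) *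
    θ m (padOnes mu h) lam

/-- `γ = (1 − α)/√α = (1 − s²)/s ∈ ℚ(s)`. -/
def gammaF : F := (1 - RatFunc.X ^ 2) * (RatFunc.X)⁻¹

/-- The partition obtained from `μ` by adding `1` to every part (the decreasing rearrangement
of `(μ_1+1, …, μ_{ℓ(μ)}+1)`), a partition of `|μ| + ℓ(μ)`. -/
def addOne {k : ℕ} (mu : k.Partition) : (k + Multiset.card mu.parts).Partition :=
  ⟨mu.parts.map (· + 1), by
    intro i hi
    obtain ⟨a, _, rfl⟩ := Multiset.mem_map.1 hi
    omega, by
    have h : ∀ m : Multiset ℕ, (m.map (· + 1)).sum = m.sum + Multiset.card m := by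
      intro m
      induction m using Multiset.induction_on with
      | empty => simp
      | cons a s ih => simp [ih]; omega
    rw [h, mu.parts_sum]⟩

/-! ## The α-Plancherel measure and limit shape -/

/-- `j`-th part of the conjugate partition: the number of parts of `λ` that are `≥ j`. -/
def conj {n : ℕ} (lam : n.Partition) (j : ℕ) : ℕ :=
  Multiset.card (lam.parts.filter (fun p => j ≤ p))

/-- The deformed hook product
`j_λ^{(α)} = ∏_{(i,j) ∈ λ} (α(λ_i−j) + (λ'_j−i) + 1)·(α(λ_i−j) + (λ'_j−i) + α)`. -/
def jackJ (R : Type*) [CommRing R] (α : R) {n : ℕ} (lam : n.Partition) : R :=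
  ∏ i ∈ Finset.Icc 1 (Multiset.card lam.parts), ∏ j ∈ Finset.Icc 1 (pt lam i),
    ((α * ((pt lam i - j : ℕ) : R) + ((conj lam j - i : ℕ) : R) + 1) *
      (α * ((pt lam i - j : ℕ) : R) + ((conj lam j - i : ℕ) : R) + α))

/-- The `α`-Plancherel weight `w_n^{(α)}(λ) = αⁿ n! / j_λ^{(α)}`. -/
def wPl (α : ℝ) (n : ℕ) (lam : n.Partition) : ℝ :=
  α ^ n * (n.factorial : ℝ) / jackJ ℝ α lam

/-- The profile `ω_{s,t,λ}` of the anisotropic Young diagram `T_{s,t}(λ)`: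
`ω_{s,t,λ}(x) = inf{ u + v : u,v ≥ 0, u − v = x, v ≥ t·#{i : s λ_i > u} }`. -/
def profile (s t : ℝ) {n : ℕ} (lam : n.Partition) (x : ℝ) : ℝ :=
  sInf { w : ℝ | ∃ u v : ℝ, 0 ≤ u ∧ 0 ≤ v ∧ u - v = x ∧
    t * (Multiset.card (lam.parts.filter (fun p => u < s * (p : ℝ))) : ℝ) ≤ v ∧ w = u + v }

/-- The Logan–Shepp–Kerov–Vershik limit shape `Ω`. -/
def Omega (x : ℝ) : ℝ :=
  if 2 ≤ |x| then |x|
  else (2 / Real.pi) * (x * Real.arcsin (x / 2) + Real.sqrt (4 - x ^ 2))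

/-! Multiplying the anisotropic contents by `s` turns them into `αλ_i − i ∈ ℤ[α]`, so the
moment series is `G(w/s)` for a series `G ∈ ℤ[α]⟦w⟧`, i.e. `M_k^s(λ) = s^{-k} G_k(α)`. At `α = 0`
the scaled inner and outer contents are the same numbers `−i`, apart from the outer corner `i = 0`,
whose factor is `1`; so `G(0) = 1`, whence `α ∣ G_k` for `k ≥ 1` and
`s^{k−2} M_k^s(λ) = (G_k / α)(α)`. -/

section CornerSeries

variable {R S : Type*} [CommRing R] [CommRing S]

def oneSubCMulX (c : R) : PowerSeries R := 1 - PowerSeries.C c * PowerSeries.X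

def geomSeries (c : R) : PowerSeries R := PowerSeries.mk (c ^ ·)

lemma rescale_one_sub_X (c : R) : PowerSeries.rescale c (1 - PowerSeries.X) = oneSubCMulX c := by
  rw [map_sub, map_one, PowerSeries.rescale_X, oneSubCMulX]

lemma rescale_mk_one (c : R) : PowerSeries.rescale c (PowerSeries.mk 1) = geomSeries c := by
  simp [PowerSeries.rescale_mk, geomSeries]

lemma oneSubCMulX_mul_geomSeries (c : R) : oneSubCMulX c * geomSeries c = 1 := by
  rw [mul_comm, ← rescale_mk_one, ← rescale_one_sub_X, ← map_mul,
    PowerSeries.mk_one_mul_one_sub_eq_one, map_one]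

lemma geomSeries_zero : geomSeries (0 : R) = 1 := by
  simp [← rescale_mk_one]

lemma rescale_oneSubCMulX (r c : R) :
    PowerSeries.rescale r (oneSubCMulX c) = oneSubCMulX (c * r) := by
  rw [← rescale_one_sub_X, PowerSeries.rescale_rescale, rescale_one_sub_X]

lemma rescale_geomSeries (r c : R) :
    PowerSeries.rescale r (geomSeries c) = geomSeries (c * r) := by
  rw [← rescale_mk_one, PowerSeries.rescale_rescale, rescale_mk_one]

lemma map_oneSubCMulX (f : R →+* S) (c : R) :
    PowerSeries.map f (oneSubCMulX c) = oneSubCMulX (f c) := by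
  simp [oneSubCMulX]

lemma map_geomSeries (f : R →+* S) (c : R) :
    PowerSeries.map f (geomSeries c) = geomSeries (f c) := by
  ext n
  simp [geomSeries]

lemma prod_oneSubCMulX_mul_prod_geomSeries (m : Multiset R) :
    (m.map oneSubCMulX).prod * (m.map geomSeries).prod = 1 := by
  rw [← Multiset.prod_map_mul]
  simp [oneSubCMulX_mul_geomSeries]

lemma inv_prod_oneSubCMulX {K : Type*} [Field K] (m : Multiset K) :
    (m.map oneSubCMulX).prod⁻¹ = (m.map geomSeries).prod := by
  have h := prod_oneSubCMulX_mul_prod_geomSeries m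
  refine (PowerSeries.inv_eq_iff_mul_eq_one ?_).2 (by rwa [mul_comm])
  exact left_ne_zero_of_mul_eq_one (by simpa using congrArg PowerSeries.constantCoeff h)

def cornerSeries (I O : Multiset R) : PowerSeries R :=
  (I.map oneSubCMulX).prod * (O.map geomSeries).prod

lemma cornerSeries_cons_zero (I : Multiset R) : cornerSeries I (0 ::ₘ I) = 1 := by
  rw [cornerSeries, Multiset.map_cons, Multiset.prod_cons, geomSeries_zero, one_mul,
    prod_oneSubCMulX_mul_prod_geomSeries]

lemma map_cornerSeries (f : R →+* S) (I O : Multiset R) :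
    PowerSeries.map f (cornerSeries I O) = cornerSeries (I.map f) (O.map f) := by
  simp [cornerSeries, map_multiset_prod, Multiset.map_map, map_oneSubCMulX,
    map_geomSeries]

lemma rescale_cornerSeries (r : R) (I O : Multiset R) :
    PowerSeries.rescale r (cornerSeries I O) =
      cornerSeries (I.map (· * r)) (O.map (· * r)) := by
  simp [cornerSeries, map_multiset_prod, Multiset.map_map,
    rescale_oneSubCMulX, rescale_geomSeries]

end CornerSeries

lemma momentSeries_eq_cornerSeries {K : Type*} [Field K] (s : K) {n : ℕ} (lam : n.Partition) :
    momentSeries K s lam = cornerSeries (innerContentsA K s lam) (outerContentsA K s lam) := by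
  rw [momentSeries, cornerSeries, ← inv_prod_oneSubCMulX]
  rfl

lemma outerIdx_val_eq_cons {n : ℕ} (lam : n.Partition) :
    (outerIdx lam).val = 0 ::ₘ (innerIdx lam).val := by
  have h : outerIdx lam = insert 0 (innerIdx lam) := by
    ext i
    simp only [outerIdx, innerIdx, Finset.mem_insert, Finset.mem_filter, Finset.mem_range]
    by_cases hi : i = 0 <;> simp [hi]
  rw [h, Finset.insert_val_of_notMem (by simp [innerIdx])]

/-- `s` times the anisotropic contents, as polynomials in `α = s²`. -/
def innerContentsPoly {n : ℕ} (lam : n.Partition) : Multiset ℤ[X] :=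
  (innerIdx lam).val.map (fun i => X * (pt lam i : ℤ[X]) - (i : ℤ[X]))

def outerContentsPoly {n : ℕ} (lam : n.Partition) : Multiset ℤ[X] :=
  (outerIdx lam).val.map (fun i => X * (pt lam (i + 1) : ℤ[X]) - (i : ℤ[X]))

def momentSeriesPoly {n : ℕ} (lam : n.Partition) : PowerSeries ℤ[X] :=
  cornerSeries (innerContentsPoly lam) (outerContentsPoly lam)

lemma map_evalRingHom_zero_momentSeriesPoly {n : ℕ} (lam : n.Partition) :
    PowerSeries.map (evalRingHom 0) (momentSeriesPoly lam) = 1 := by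
  rw [momentSeriesPoly, map_cornerSeries, outerContentsPoly, outerIdx_val_eq_cons]
  convert cornerSeries_cons_zero ((innerIdx lam).val.map fun i : ℕ => -(i : ℤ)) using 2 <;>
    simp [innerContentsPoly]

lemma X_dvd_coeff_momentSeriesPoly {n : ℕ} (lam : n.Partition) {k : ℕ} (hk : k ≠ 0) :
    X ∣ PowerSeries.coeff k (momentSeriesPoly lam) := by
  rw [X_dvd_iff, coeff_zero_eq_eval_zero, ← coe_evalRingHom, ← PowerSeries.coeff_map,
    map_evalRingHom_zero_momentSeriesPoly, PowerSeries.coeff_one, if_neg hk]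

section Field

variable {K : Type*} [Field K] [Algebra ℤ K] {s : K}

lemma anisotropic_content_eq (hs : s ≠ 0) (p i : ℕ) :
    s * p - i * s⁻¹ = aeval (s ^ 2) (X * (p : ℤ[X]) - (i : ℤ[X])) * s⁻¹ := by
  simp only [map_sub, map_mul, aeval_X, map_natCast]
  field_simp

lemma momentSeries_eq_rescale (hs : s ≠ 0) {n : ℕ} (lam : n.Partition) :
    momentSeries K s lam =
      PowerSeries.rescale s⁻¹ (PowerSeries.map (aeval (R := ℤ) (s ^ 2)).toRingHom
        (momentSeriesPoly lam)) := by
  simp only [momentSeries_eq_cornerSeries, momentSeriesPoly, map_cornerSeries,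
    rescale_cornerSeries, innerContentsA, outerContentsA, innerContentsPoly, outerContentsPoly,
    Multiset.map_map, Function.comp_def, AlgHom.toRingHom_eq_coe, RingHom.coe_coe,
    anisotropic_content_eq hs]

lemma M_eq_inv_pow_mul_aeval (hs : s ≠ 0) {n : ℕ} (lam : n.Partition) (k : ℕ) :
    M K s lam k = s⁻¹ ^ k * aeval (s ^ 2) (PowerSeries.coeff k (momentSeriesPoly lam)) := by
  rw [M, momentSeries_eq_rescale hs, PowerSeries.coeff_rescale, PowerSeries.coeff_map]
  rfl

theorem exists_pow_sub_two_mul_M_eq_aeval (hs : s ≠ 0) {n : ℕ} (lam : n.Partition) {k : ℕ}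
    (hk : 2 ≤ k) :
    ∃ P : ℤ[X], s ^ (k - 2) * M K s lam k = aeval (s ^ 2) P := by
  obtain ⟨P, hP⟩ := X_dvd_coeff_momentSeriesPoly lam (k := k) (by omega)
  obtain ⟨j, rfl⟩ := Nat.exists_eq_add_of_le' hk
  refine ⟨P, ?_⟩
  rw [M_eq_inv_pow_mul_aeval hs, hP, map_mul, aeval_X, Nat.add_sub_cancel, inv_pow]
  field_simp
  ring

end Field

/-- for `k ≥ 2`, `s^{k−2}·M_k^s(λ)` lies in `ℤ[s²] ⊆ ℚ(s)`,
i.e. it is a polynomial in `α = s²` with integer coefficients. -/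
theorem moment_polynomial_in_alpha (k : ℕ) (hk : 2 ≤ k) (n : ℕ) (lam : n.Partition) :
    ∃ P : Polynomial ℤ,
      RatFunc.X ^ (k - 2) * M F RatFunc.X lam k =
        Polynomial.aeval ((RatFunc.X : F) ^ 2) P :=
  exists_pow_sub_two_mul_M_eq_aeval RatFunc.X_ne_zero lam hk

end JackPaper
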